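/- Suppose f ∈ C²(ℝ^d) with ‖∇²f(x)‖ ≤ M for all x, 0 < α ≤ 1/M, f(0) = 0 and ∇f(0) = 0. Let σ > 0 and let ρ ∈ (0,1) satisfy ρM + Mρ²/2 < (ασ²/(2d))(1−ρ)². Let x ∈ ℝ^d satisfy ‖∇f(x)‖ ≥ σ‖x‖, and suppose there exists x' ≠ 0 with f(x') = 0 and ‖x − x'‖ < ρ‖x'‖. Then for every coordinate index i with |e_iᵀ ∇f(x)| ≥ (1/√d) ‖∇f(x)‖, it holds that f(x − α e_i ∂_i f(x)) < 0. -/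

import Mathlib

/-!
Because `‖∇²f‖ ≤ M`, the gradient is `M`-Lipschitz, and the descent lemma
`f (a + v) ≤ f a + ⟪∇f a, v⟫ + M/2 ‖v‖²` gives two estimates. Since `αM ≤ 1`, the coordinate
step lowers `f` by at least `α/2 (∂ᵢf x)² ≥ α/(2d) ‖∇f x‖² ≥ ασ²/(2d) ‖x‖²`. Expanding around the
zero `x'`, where `‖∇f x'‖ ≤ M‖x'‖` because `∇f 0 = 0`, gives `f x ≤ (ρM + Mρ²/2) ‖x'‖²`. Since
`‖x‖ ≥ (1 - ρ)‖x'‖`, the hypothesis on `ρ` makes the decrease larger than `f x`.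
-/

open RealInnerProductSpace

noncomputable section

/-- The Hessian `∇²f(x)` of `f` at `x`, as a continuous linear map. -/
def hess (d : ℕ) (f : EuclideanSpace ℝ (Fin d) → ℝ) (x : EuclideanSpace ℝ (Fin d)) :
    EuclideanSpace ℝ (Fin d) →L[ℝ] EuclideanSpace ℝ (Fin d) :=
  fderiv ℝ (gradient f) x

section SmoothDescent

variable {F : Type*} [NormedAddCommGroup F] [InnerProductSpace ℝ F] [CompleteSpace F]
  {f : F → ℝ} {M : ℝ}

theorem ContDiff.norm_gradient_sub_le (hf : ContDiff ℝ 2 f)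
    (hM : ∀ x, ‖fderiv ℝ (gradient f) x‖ ≤ M) (y z : F) :
    ‖gradient f y - gradient f z‖ ≤ M * ‖y - z‖ := by
  have hgrad : Differentiable ℝ (gradient f) := by
    have h : ContDiff ℝ 1 (fderiv ℝ f) := hf.fderiv_right (m := 1) le_rfl
    exact ((InnerProductSpace.toDual ℝ F).symm.contDiff.comp h).differentiable one_ne_zero
  exact convex_univ.norm_image_sub_le_of_norm_fderiv_le (fun u _ ↦ hgrad u) (fun u _ ↦ hM u)
    (Set.mem_univ z) (Set.mem_univ y)

theorem apply_add_le_of_norm_gradient_sub_le (hf : Differentiable ℝ f)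
    (hL : ∀ y z, ‖gradient f y - gradient f z‖ ≤ M * ‖y - z‖) (a v : F) :
    f (a + v) ≤ f a + ⟪gradient f a, v⟫ + M / 2 * ‖v‖ ^ 2 := by
  set φ : ℝ → ℝ := fun t ↦ f (a + t • v) - t * ⟪gradient f a, v⟫ - M / 2 * t ^ 2 * ‖v‖ ^ 2
  have hφ : ∀ t, HasDerivAt φ
      (⟪gradient f (a + t • v), v⟫ - ⟪gradient f a, v⟫ - M * t * ‖v‖ ^ 2) t := by
    intro t
    have hline : HasDerivAt (fun t : ℝ ↦ a + t • v) v t := by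
      simpa using ((hasDerivAt_id t).smul_const v).const_add a
    have hcomp := (hf (a + t • v)).hasGradientAt.hasFDerivAt.comp_hasDerivAt t hline
    refine ((hcomp.sub ((hasDerivAt_id t).mul_const ⟪gradient f a, v⟫)).sub
      (((hasDerivAt_pow 2 t).const_mul (M / 2)).mul_const (‖v‖ ^ 2))).congr_deriv ?_
    simp only [InnerProductSpace.toDual_apply_apply]
    ring
  have hanti : AntitoneOn φ (Set.Ici 0) := by
    refine antitoneOn_of_hasDerivWithinAt_nonpos (convex_Ici 0)
      (fun t _ ↦ (hφ t).continuousAt.continuousWithinAt) (fun t _ ↦ (hφ t).hasDerivWithinAt) ?_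
    intro t ht
    rw [interior_Ici] at ht
    have hLt : ‖gradient f (a + t • v) - gradient f a‖ ≤ M * (t * ‖v‖) := by
      simpa [norm_smul, abs_of_pos (Set.mem_Ioi.1 ht)] using hL (a + t • v) a
    calc ⟪gradient f (a + t • v), v⟫ - ⟪gradient f a, v⟫ - M * t * ‖v‖ ^ 2
        = ⟪gradient f (a + t • v) - gradient f a, v⟫ - M * t * ‖v‖ ^ 2 := by
          rw [inner_sub_left]
      _ ≤ M * (t * ‖v‖) * ‖v‖ - M * t * ‖v‖ ^ 2 := by
          gcongr
          exact (real_inner_le_norm _ _).trans (by gcongr)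
      _ = 0 := by ring
  have h01 : φ 1 ≤ φ 0 := hanti (Set.mem_Ici.2 le_rfl) (Set.mem_Ici.2 zero_le_one) zero_le_one
  simp only [φ, one_smul, zero_smul, add_zero] at h01
  linarith

theorem apply_sub_smul_le_of_norm_eq_one (hf : Differentiable ℝ f)
    (hL : ∀ y z, ‖gradient f y - gradient f z‖ ≤ M * ‖y - z‖) {α : ℝ} (hα : 0 ≤ α)
    (hMα : M * α ≤ 1) (x : F) {u : F} (hu : ‖u‖ = 1) :
    f (x - (α * ⟪gradient f x, u⟫) • u) ≤ f x - α / 2 * ⟪gradient f x, u⟫ ^ 2 := by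
  set g := ⟪gradient f x, u⟫
  have h := apply_add_le_of_norm_gradient_sub_le hf hL x (-(α * g) • u)
  rw [neg_smul, ← sub_eq_add_neg, inner_neg_right, real_inner_smul_right, norm_neg, norm_smul,
    hu, Real.norm_eq_abs, mul_one, sq_abs] at h
  have hstep := mul_le_mul_of_nonneg_right hMα (mul_nonneg hα (sq_nonneg g))
  linarith

theorem apply_le_of_norm_sub_le_mul_norm (hf : Differentiable ℝ f)
    (hL : ∀ y z, ‖gradient f y - gradient f z‖ ≤ M * ‖y - z‖) (h0 : gradient f 0 = 0)
    (hM : 0 ≤ M) {ρ : ℝ} {x y : F} (hxy : ‖x - y‖ ≤ ρ * ‖y‖) :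
    f x ≤ f y + (ρ * M + M * ρ ^ 2 / 2) * ‖y‖ ^ 2 := by
  have hgy : ‖gradient f y‖ ≤ M * ‖y‖ := by simpa [h0] using hL y 0
  have h := apply_add_le_of_norm_gradient_sub_le hf hL y (x - y)
  rw [add_sub_cancel] at h
  calc f x ≤ f y + ‖gradient f y‖ * ‖x - y‖ + M / 2 * ‖x - y‖ ^ 2 := by
        linarith [real_inner_le_norm (gradient f y) (x - y)]
    _ ≤ f y + M * ‖y‖ * (ρ * ‖y‖) + M / 2 * (ρ * ‖y‖) ^ 2 := by gcongr
    _ = f y + (ρ * M + M * ρ ^ 2 / 2) * ‖y‖ ^ 2 := by ring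

end SmoothDescent

theorem EuclideanSpace.apply_sub_coordinate_step_le {ι : Type*} [Fintype ι] [DecidableEq ι]
    {f : EuclideanSpace ℝ ι → ℝ} {M : ℝ} (hf : Differentiable ℝ f)
    (hL : ∀ y z, ‖gradient f y - gradient f z‖ ≤ M * ‖y - z‖) {α : ℝ} (hα : 0 ≤ α)
    (hMα : M * α ≤ 1) (x : EuclideanSpace ℝ ι) (i : ι) :
    f (x - (α * gradient f x i) • EuclideanSpace.single i (1 : ℝ)) ≤
      f x - α / 2 * gradient f x i ^ 2 := by
  have hcoord : gradient f x i = ⟪gradient f x, EuclideanSpace.single i 1⟫ := by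
    rw [EuclideanSpace.inner_single_right, one_mul, conj_trivial]
  rw [hcoord]
  exact apply_sub_smul_le_of_norm_eq_one hf hL hα hMα x (by simp)

theorem rcgd_step_escapes_trap_general
    {d : ℕ} (f : EuclideanSpace ℝ (Fin d) → ℝ) (M α : ℝ)
    (hf : ContDiff ℝ 2 f)
    (hM : ∀ x, ‖hess d f x‖ ≤ M)
    (hα : 0 < α) (hα' : α ≤ 1 / M)
    (hcrit : gradient f 0 = 0)
    (σ ρ : ℝ) (hσ : 0 < σ) (hρ1 : ρ < 1)
    (hρ : ρ * M + M * ρ ^ 2 / 2 < (α * σ ^ 2 / (2 * d)) * (1 - ρ) ^ 2)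
    (x : EuclideanSpace ℝ (Fin d)) (hx : σ * ‖x‖ ≤ ‖gradient f x‖)
    (x' : EuclideanSpace ℝ (Fin d)) (hx'0 : x' ≠ 0) (hfx' : f x' = 0)
    (hnear : ‖x - x'‖ < ρ * ‖x'‖)
    (i : Fin d) (hi : (1 / Real.sqrt d) * ‖gradient f x‖ ≤ |gradient f x i|) :
    f (x - (α * gradient f x i) • EuclideanSpace.single i (1 : ℝ)) < 0 := by
  have hd : (0 : ℝ) < d := Nat.cast_pos.2 i.pos
  have hM0 : 0 < M := one_div_pos.1 (hα.trans_le hα')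
  have hMα : M * α ≤ 1 := by rwa [le_div_iff₀ hM0, mul_comm] at hα'
  have hdiff : Differentiable ℝ f := hf.differentiable (by norm_num)
  have hL := hf.norm_gradient_sub_le hM
  have hstep := EuclideanSpace.apply_sub_coordinate_step_le hdiff hL hα.le hMα x i
  have hfx := apply_le_of_norm_sub_le_mul_norm hdiff hL hcrit hM0.le hnear.le
  have hcoord : ‖gradient f x‖ ^ 2 / d ≤ gradient f x i ^ 2 := by
    have h := pow_le_pow_left₀ (by positivity) hi 2
    rwa [mul_pow, div_pow, one_pow, Real.sq_sqrt hd.le, sq_abs, one_div_mul_eq_div] at h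
  have hgrad : σ ^ 2 * ‖x‖ ^ 2 ≤ ‖gradient f x‖ ^ 2 := by
    simpa [mul_pow] using pow_le_pow_left₀ (by positivity) hx 2
  have hfar : (1 - ρ) * ‖x'‖ ≤ ‖x‖ := by
    linarith [norm_sub_norm_le x' x, norm_sub_rev x x']
  have hdecrease : (ρ * M + M * ρ ^ 2 / 2) * ‖x'‖ ^ 2 < α / 2 * gradient f x i ^ 2 := calc
    _ < (α * σ ^ 2 / (2 * d)) * ((1 - ρ) * ‖x'‖) ^ 2 := by
      rw [mul_pow, ← mul_assoc]
      exact mul_lt_mul_of_pos_right hρ (by positivity)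
    _ ≤ (α * σ ^ 2 / (2 * d)) * ‖x‖ ^ 2 := by gcongr
    _ = α / 2 * (σ ^ 2 * ‖x‖ ^ 2 / d) := by field_simp
    _ ≤ α / 2 * (‖gradient f x‖ ^ 2 / d) := by gcongr
    _ ≤ α / 2 * gradient f x i ^ 2 := by gcongr
  linarith

/-- Escape from the trap region: if `‖∇f(x)‖ ≥ σ‖x‖`, `x` is within distance `ρ‖x'‖` of some
`x' ≠ 0` with `f(x') = 0`, and the chosen coordinate satisfies
`|e_iᵀ∇f(x)| ≥ (1/√d)‖∇f(x)‖`, then `f(x − α e_i ∂_i f(x)) < 0`. -/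
theorem rcgd_step_escapes_trap
    {d : ℕ} (hd : 1 ≤ d) (f : EuclideanSpace ℝ (Fin d) → ℝ) (M α : ℝ)
    (hf : ContDiff ℝ 2 f)
    (hM : ∀ x, ‖hess d f x‖ ≤ M)
    (hα : 0 < α) (hα' : α ≤ 1 / M)
    (hf0 : f 0 = 0) (hcrit : gradient f 0 = 0)
    (σ ρ : ℝ) (hσ : 0 < σ) (hρ0 : 0 < ρ) (hρ1 : ρ < 1)
    (hρ : ρ * M + M * ρ ^ 2 / 2 < (α * σ ^ 2 / (2 * d)) * (1 - ρ) ^ 2)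
    (x : EuclideanSpace ℝ (Fin d)) (hx : σ * ‖x‖ ≤ ‖gradient f x‖)
    (x' : EuclideanSpace ℝ (Fin d)) (hx'0 : x' ≠ 0) (hfx' : f x' = 0)
    (hnear : ‖x - x'‖ < ρ * ‖x'‖)
    (i : Fin d) (hi : (1 / Real.sqrt d) * ‖gradient f x‖ ≤ |gradient f x i|) :
    f (x - (α * gradient f x i) • EuclideanSpace.single i (1 : ℝ)) < 0 :=
  rcgd_step_escapes_trap_general f M α hf hM hα hα' hcrit σ ρ hσ hρ1 hρ x hx x' hx'0 hfx' hnear i hi
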